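/- arXiv:1501.04886 — 7 statements merged into one kernel-verified Lean document; each statement's English description precedes it below -/
import Mathlib

section
/- Let τ > 0 and let ū : [0,2π] × [0,π/τ] → ℝ be a C¹ function. Define ω(θ,s) := √(1 + (τ²−1)·cos²(τs)) · ū(θ,s). Then ∫_{[0,2π]×[0,π/τ]} { ((1 + (τ²−1)cos²(τs))/τ²)·(∂ū/∂s)²(θ,s) − (τ²/(1 + (τ²−1)cos²(τs)))·ū(θ,s)² } dθ ds = ∫_{[0,2π]×[0,π/τ]} { (1/τ²)·(∂ω/∂s)²(θ,s) − ω(θ,s)² } dθ ds. -/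
open Real MeasureTheory

namespace Stmt4Aux

noncomputable def F (τ s : ℝ) : ℝ := 1 + (τ^2-1) * Real.cos (τ*s)^2
noncomputable def DF (τ s : ℝ) : ℝ :=
  (τ^2-1) * (2 * (Real.cos (τ*s) * (-Real.sin (τ*s) * τ)))
noncomputable def DDF (τ s : ℝ) : ℝ :=
  (τ^2-1) * (2 * ((-Real.sin (τ*s) * τ) * (-Real.sin (τ*s) * τ)
      + Real.cos (τ*s) * (-(Real.cos (τ*s) * τ) * τ)))

lemma hasDerivAt_lin (τ s : ℝ) : HasDerivAt (fun s : ℝ => τ * s) τ s := by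
  simpa using (hasDerivAt_id s).const_mul τ

lemma hasDerivAt_cos' (τ s : ℝ) :
    HasDerivAt (fun s : ℝ => Real.cos (τ*s)) (-Real.sin (τ*s) * τ) s :=
  (Real.hasDerivAt_cos (τ*s)).comp s (hasDerivAt_lin τ s)

lemma hasDerivAt_sin' (τ s : ℝ) :
    HasDerivAt (fun s : ℝ => Real.sin (τ*s)) (Real.cos (τ*s) * τ) s :=
  (Real.hasDerivAt_sin (τ*s)).comp s (hasDerivAt_lin τ s)

lemma hasDerivAt_F (τ s : ℝ) : HasDerivAt (F τ) (DF τ s) s := by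
  have h := (((hasDerivAt_cos' τ s).pow 2).const_mul (τ^2-1)).const_add 1
  unfold F DF
  refine h.congr_deriv ?_
  ring

lemma hasDerivAt_DF (τ s : ℝ) : HasDerivAt (DF τ) (DDF τ s) s := by
  have h := (((hasDerivAt_cos' τ s).mul
      ((hasDerivAt_sin' τ s).neg.mul_const τ)).const_mul 2).const_mul (τ^2-1)
  unfold DF DDF
  exact h.congr_deriv rfl

lemma F_pos {τ : ℝ} (hτ : 0 < τ) (s : ℝ) : 0 < F τ s := by
  unfold F
  rcases le_or_gt 1 (τ^2) with h | h
  · nlinarith [sq_nonneg (Real.cos (τ*s))]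
  · nlinarith [Real.cos_sq_le_one (τ*s), sq_nonneg (Real.cos (τ*s)), sq_nonneg τ, hτ]

lemma hasDerivAt_sqrtF {τ : ℝ} (hτ : 0 < τ) (s : ℝ) :
    HasDerivAt (fun s => Real.sqrt (F τ s)) (DF τ s / (2 * Real.sqrt (F τ s))) s := by
  have h := (Real.hasDerivAt_sqrt (F_pos hτ s).ne').comp s (hasDerivAt_F τ s)
  refine h.congr_deriv ?_
  ring

lemma key {τ : ℝ} (hτ : 0 < τ) (s U U' : ℝ) :
    (1/τ^2) * (DF τ s / (2*Real.sqrt (F τ s)) * U + Real.sqrt (F τ s) * U')^2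
      - (Real.sqrt (F τ s) * U)^2
      - ((F τ s / τ^2) * U'^2 - (τ^2 / F τ s) * U^2)
    = DDF τ s / (2*τ^2) * U^2 + DF τ s / (2*τ^2) * (2 * U * U') := by
  have hFp := F_pos hτ s
  have hr0 : Real.sqrt (F τ s) ≠ 0 := (Real.sqrt_pos.mpr hFp).ne'
  have hr2 : Real.sqrt (F τ s)^2 = F τ s := Real.sq_sqrt hFp.le
  have hτ2 : (τ:ℝ)^2 ≠ 0 := by positivity
  have hFne : F τ s ≠ 0 := hFp.ne'
  have hexp : (DF τ s / (2*Real.sqrt (F τ s)) * U + Real.sqrt (F τ s) * U')^2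
      = DF τ s^2*U^2/(4*F τ s) + DF τ s*U*U' + F τ s*U'^2 := by
    field_simp
    linear_combination (16*Real.sqrt (F τ s)^2*U'^2*(F τ s) - 4*(DF τ s)^2*U^2) * hr2
  have hc : Real.sin (τ*s)^2 = 1 - Real.cos (τ*s)^2 := by
    have := Real.sin_sq_add_cos_sq (τ*s); linarith
  have hpoly : DF τ s^2 - 4*τ^2*(F τ s)^2 + 4*τ^2*τ^2 = 2*(F τ s)*(DDF τ s) := by
    unfold F DF DDF
    linear_combination (4*(τ^2-1)^2*τ^2*Real.cos (τ*s)^2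
      - 4*(τ^2-1)*τ^2*(1+(τ^2-1)*Real.cos (τ*s)^2)) * hc
  have h2 : DF τ s^2/(4*τ^2*F τ s) - F τ s + τ^2/(F τ s) = DDF τ s/(2*τ^2) := by
    have hd : DF τ s^2/(4*τ^2*F τ s) - F τ s + τ^2/(F τ s) - DDF τ s/(2*τ^2)
        = (DF τ s^2 - 4*τ^2*(F τ s)^2 + 4*τ^2*τ^2 - 2*(F τ s)*(DDF τ s))/(4*τ^2*F τ s) := by
      field_simp
      ring
    have h0 : DF τ s^2 - 4*τ^2*(F τ s)^2 + 4*τ^2*τ^2 - 2*(F τ s)*(DDF τ s) = 0 := by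
      linarith
    rw [h0, zero_div] at hd
    linarith
  rw [hexp, mul_pow, hr2]
  linear_combination U^2 * h2

end Stmt4Aux

open Stmt4Aux

/-- Transformation of the index form of the spherical surface `S_λ(p)` in polar
coordinates (proof of Lemma 5.3 of the paper): for a `C¹` function `ū(θ,s)` on
`[0,2π] × [0,π/τ]` and `ω(θ,s) := √(1+(τ²−1)cos²(τs)) ū(θ,s)`, the integral of
`((1+(τ²−1)cos²(τs))/τ²) (∂ū/∂s)² − (τ²/(1+(τ²−1)cos²(τs))) ū²` over the rectangle
equals the integral of `(1/τ²)(∂ω/∂s)² − ω²`. -/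
theorem stmt_4 (τ : ℝ) (hτ : 0 < τ) (u : ℝ → ℝ → ℝ)
    (hu : ContDiff ℝ 1 (fun p : ℝ × ℝ => u p.1 p.2)) :
    ∫ p in Set.Icc (0 : ℝ) (2 * π) ×ˢ Set.Icc (0 : ℝ) (π / τ),
        (((1 + (τ ^ 2 - 1) * Real.cos (τ * p.2) ^ 2) / τ ^ 2) * (deriv (u p.1) p.2) ^ 2
          - (τ ^ 2 / (1 + (τ ^ 2 - 1) * Real.cos (τ * p.2) ^ 2)) * (u p.1 p.2) ^ 2)
    = ∫ p in Set.Icc (0 : ℝ) (2 * π) ×ˢ Set.Icc (0 : ℝ) (π / τ),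
        ((1 / τ ^ 2) *
            (deriv (fun s => Real.sqrt (1 + (τ ^ 2 - 1) * Real.cos (τ * s) ^ 2) * u p.1 s)
              p.2) ^ 2
          - (Real.sqrt (1 + (τ ^ 2 - 1) * Real.cos (τ * p.2) ^ 2) * u p.1 p.2) ^ 2) := by
  have hτ2 : (τ:ℝ)^2 ≠ 0 := by positivity
  -- basic continuity facts
  have hU : Continuous fun p : ℝ × ℝ => u p.1 p.2 := hu.continuous
  have huθ : ∀ θ : ℝ, ContDiff ℝ 1 (u θ) := fun θ =>
    hu.comp ((contDiff_const (c := θ)).prodMk contDiff_id)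
  have hud : ∀ θ s : ℝ, HasDerivAt (u θ) (deriv (u θ) s) s := fun θ s =>
    (((huθ θ).differentiable one_ne_zero) s).hasDerivAt
  have hderiv_eq : ∀ p : ℝ × ℝ, deriv (u p.1) p.2
      = fderiv ℝ (fun q : ℝ × ℝ => u q.1 q.2) p ((0:ℝ), (1:ℝ)) := by
    intro p
    have h1 : HasDerivAt (fun s : ℝ => ((p.1, s) : ℝ × ℝ)) ((0:ℝ), (1:ℝ)) p.2 :=
      (hasDerivAt_const _ _).prodMk (hasDerivAt_id _)
    have h2 := (((hu.differentiable one_ne_zero) p).hasFDerivAt).comp_hasDerivAt p.2 h1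
    exact h2.deriv
  have hdu : Continuous fun p : ℝ × ℝ => deriv (u p.1) p.2 := by
    have hc : Continuous fun p : ℝ × ℝ =>
        fderiv ℝ (fun q : ℝ × ℝ => u q.1 q.2) p ((0:ℝ), (1:ℝ)) :=
      (hu.continuous_fderiv one_ne_zero).clm_apply continuous_const
    exact hc.congr fun p => (hderiv_eq p).symm
  have hFc : Continuous (F τ) := by
    unfold F; fun_prop
  have hDFc : Continuous (DF τ) := by
    unfold DF; fun_prop
  have hDDFc : Continuous (DDF τ) := by
    unfold DDF; fun_prop
  have hFne : ∀ s, F τ s ≠ 0 := fun s => (F_pos hτ s).ne'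
  have hsqc : Continuous fun s => Real.sqrt (F τ s) := Real.continuous_sqrt.comp hFc
  have hsqne : ∀ s, (2 : ℝ) * Real.sqrt (F τ s) ≠ 0 := fun s => by
    have := Real.sqrt_pos.mpr (F_pos hτ s); positivity
  -- the two integrands, written with F
  set Rect : Set (ℝ × ℝ) := Set.Icc (0 : ℝ) (2 * π) ×ˢ Set.Icc (0 : ℝ) (π / τ) with hRect
  have hcompact : IsCompact Rect := isCompact_Icc.prod isCompact_Icc
  set L : ℝ × ℝ → ℝ := fun p =>
    (F τ p.2 / τ^2) * (deriv (u p.1) p.2)^2 - (τ^2 / F τ p.2) * (u p.1 p.2)^2 with hL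
  set R : ℝ × ℝ → ℝ := fun p =>
    (1/τ^2) * (DF τ p.2 / (2*Real.sqrt (F τ p.2)) * u p.1 p.2
        + Real.sqrt (F τ p.2) * deriv (u p.1) p.2)^2
      - (Real.sqrt (F τ p.2) * u p.1 p.2)^2 with hR
  -- the deriv of ω equals the explicit formula
  have hWd : ∀ θ s : ℝ, HasDerivAt (fun s => Real.sqrt (F τ s) * u θ s)
      (DF τ s / (2*Real.sqrt (F τ s)) * u θ s + Real.sqrt (F τ s) * deriv (u θ) s) s :=
    fun θ s => (hasDerivAt_sqrtF hτ s).mul (hud θ s)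
  have hWderiv : ∀ θ s : ℝ, deriv (fun s => Real.sqrt (F τ s) * u θ s) s
      = DF τ s / (2*Real.sqrt (F τ s)) * u θ s + Real.sqrt (F τ s) * deriv (u θ) s :=
    fun θ s => (hWd θ s).deriv
  -- rewrite the goal
  have hgoal : (∫ p in Rect, L p = ∫ p in Rect, R p) →
      (∫ p in Rect,
        (((1 + (τ ^ 2 - 1) * Real.cos (τ * p.2) ^ 2) / τ ^ 2) * (deriv (u p.1) p.2) ^ 2
          - (τ ^ 2 / (1 + (τ ^ 2 - 1) * Real.cos (τ * p.2) ^ 2)) * (u p.1 p.2) ^ 2)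
      = ∫ p in Rect,
        ((1 / τ ^ 2) *
            (deriv (fun s => Real.sqrt (1 + (τ ^ 2 - 1) * Real.cos (τ * s) ^ 2) * u p.1 s)
              p.2) ^ 2
          - (Real.sqrt (1 + (τ ^ 2 - 1) * Real.cos (τ * p.2) ^ 2) * u p.1 p.2) ^ 2)) := by
    intro h
    have e2 : ∀ p : ℝ × ℝ, ((1 / τ ^ 2) *
            (deriv (fun s => Real.sqrt (1 + (τ ^ 2 - 1) * Real.cos (τ * s) ^ 2) * u p.1 s)
              p.2) ^ 2
          - (Real.sqrt (1 + (τ ^ 2 - 1) * Real.cos (τ * p.2) ^ 2) * u p.1 p.2) ^ 2) = R p := by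
      intro p
      show (1 / τ ^ 2) * (deriv (fun s => Real.sqrt (F τ s) * u p.1 s) p.2) ^ 2
          - (Real.sqrt (F τ p.2) * u p.1 p.2) ^ 2 = R p
      rw [hWderiv p.1 p.2]
    simp only [e2]
    convert h using 2
    rfl
  apply hgoal
  -- integrability
  have hLc : Continuous L := by
    apply Continuous.sub
    · exact ((hFc.comp continuous_snd).div_const _).mul (hdu.pow 2)
    · exact (continuous_const.div (hFc.comp continuous_snd) fun p => hFne p.2).mul (hU.pow 2)
  have hRc : Continuous R := by
    apply Continuous.sub
    · refine continuous_const.mul (Continuous.pow ?_ 2)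
      refine Continuous.add ?_ ((hsqc.comp continuous_snd).mul hdu)
      exact (((hDFc.comp continuous_snd).div
        (continuous_const.mul (hsqc.comp continuous_snd)) fun p => hsqne p.2)).mul hU
    · exact ((hsqc.comp continuous_snd).mul hU).pow 2
  have hIL : IntegrableOn L Rect := hLc.continuousOn.integrableOn_compact hcompact
  have hIR : IntegrableOn R Rect := hRc.continuousOn.integrableOn_compact hcompact
  have hsub := integral_sub hIR hIL
  -- the pointwise difference
  set G : ℝ × ℝ → ℝ := fun p =>
    DDF τ p.2 / (2*τ^2) * (u p.1 p.2)^2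
      + DF τ p.2 / (2*τ^2) * (2 * u p.1 p.2 * deriv (u p.1) p.2) with hG
  have hGc : Continuous G := by
    apply Continuous.add
    · exact ((hDDFc.comp continuous_snd).div_const _).mul (hU.pow 2)
    · exact ((hDFc.comp continuous_snd).div_const _).mul
        ((continuous_const.mul hU).mul hdu)
  have hptw : ∀ p : ℝ × ℝ, R p - L p = G p := fun p =>
    key hτ p.2 (u p.1 p.2) (deriv (u p.1) p.2)
  have hG0 : ∫ p in Rect, G p = 0 := by
    rw [hRect, Measure.volume_eq_prod, MeasureTheory.setIntegral_prod _
      (by rw [← Measure.volume_eq_prod, ← hRect]; exact hGc.continuousOn.integrableOn_compact hcompact)]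
    have hinner : ∀ θ : ℝ, ∫ s in Set.Icc (0:ℝ) (π/τ), G (θ, s) = 0 := by
      intro θ
      have hle : (0:ℝ) ≤ π/τ := by positivity
      have hgd : ∀ s : ℝ, HasDerivAt (fun s => DF τ s / (2*τ^2) * (u θ s)^2) (G (θ, s)) s := by
        intro s
        have h := ((hasDerivAt_DF τ s).div_const (2*τ^2)).mul ((hud θ s).pow 2)
        simp only [hG]
        refine h.congr_deriv ?_
        rw [Pi.pow_apply]
        ring
      have hGint : Continuous fun s => G (θ, s) := hGc.comp (Continuous.prodMk_right θ)
      rw [MeasureTheory.integral_Icc_eq_integral_Ioc,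
        ← intervalIntegral.integral_of_le hle,
        intervalIntegral.integral_eq_sub_of_hasDerivAt (fun s _ => hgd s)
          (hGint.intervalIntegrable _ _)]
      have hpi : τ * (π/τ) = π := by field_simp
      have h1 : DF τ (π/τ) = 0 := by simp [DF, hpi]
      have h2 : DF τ 0 = 0 := by simp [DF]
      rw [h1, h2]
      ring
    simp only [hinner]
    simp
  have : ∫ p in Rect, (R p - L p) = 0 := by
    simp only [hptw]; exact hG0
  rw [hsub] at this
  linarith
end

section
/- Let ξ : [0,π] → ℝ be a C¹ function with ξ(π/2) = 0. Then ∫_0^π ξ'(x)² dx ≥ ∫_0^π ξ(x)² dx. -/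
open Real Set MeasureTheory intervalIntegral Filter Topology

lemma half_wirtinger (ξ ξ' : ℝ → ℝ)
    (hderiv : ∀ x ∈ Set.Icc (0 : ℝ) (π / 2), HasDerivWithinAt ξ (ξ' x) (Set.Icc (0 : ℝ) (π / 2)) x)
    (hcont : ContinuousOn ξ' (Set.Icc (0 : ℝ) (π / 2)))
    (hmid : ξ (π / 2) = 0) :
    ∫ x in (0 : ℝ)..(π / 2), (ξ x) ^ 2 ≤ ∫ x in (0 : ℝ)..(π / 2), (ξ' x) ^ 2 := by
  have hπ : (0 : ℝ) < π / 2 := by positivity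
  have hξc : ContinuousOn ξ (Icc 0 (π / 2)) := fun x hx => (hderiv x hx).continuousWithinAt
  -- bound on ξ'
  obtain ⟨M, hM⟩ := (isCompact_Icc (a := (0:ℝ)) (b := π/2)).exists_bound_of_continuousOn hcont
  have hM0 : 0 ≤ M := le_trans (norm_nonneg _) (hM (π/2) ⟨hπ.le, le_refl _⟩)
  -- Lipschitz estimate near π/2
  have hlip : ∀ b ∈ Icc (0:ℝ) (π/2), |ξ b| ≤ M * (π/2 - b) := by
    intro b hb
    have := Convex.norm_image_sub_le_of_norm_hasDerivWithin_le hderiv hM (convex_Icc _ _)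
      ⟨hπ.le, le_refl _⟩ hb
    rw [hmid, sub_zero] at this
    simpa [abs_of_nonpos (by linarith [hb.2] : b - π/2 ≤ 0)] using this
  set F : ℝ → ℝ := fun x => (ξ x) ^ 2 * Real.tan x with hF
  -- key inequality for b < π/2
  have key : ∀ b ∈ Ico (0:ℝ) (π/2),
      (∫ x in (0:ℝ)..b, (ξ x) ^ 2) ≤ (∫ x in (0:ℝ)..b, (ξ' x) ^ 2) + F b := by
    intro b hb
    have hbI : Icc (0:ℝ) b ⊆ Icc 0 (π/2) := Icc_subset_Icc le_rfl hb.2.le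
    have hcos : ∀ x ∈ Icc (0:ℝ) b, 0 < Real.cos x := by
      intro x hx
      exact Real.cos_pos_of_mem_Ioo ⟨by linarith [hx.1, hπ], lt_of_le_of_lt hx.2 hb.2⟩
    have hct : ContinuousOn Real.tan (Icc (0:ℝ) b) := fun x hx =>
      (Real.continuousAt_tan.2 (hcos x hx).ne').continuousWithinAt
    have hcc : ContinuousOn (fun x => 1 / Real.cos x ^ 2) (Icc (0:ℝ) b) :=
      continuousOn_const.div ((Real.continuousOn_cos.mono (subset_univ _)).pow 2)
        (fun x hx => pow_ne_zero 2 (hcos x hx).ne')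
    set g : ℝ → ℝ := fun x => 2 * ξ x * ξ' x * Real.tan x + (ξ x) ^ 2 * (1 / Real.cos x ^ 2)
      with hg
    have hξcb : ContinuousOn ξ (Icc 0 b) := hξc.mono hbI
    have hξ'cb : ContinuousOn ξ' (Icc 0 b) := hcont.mono hbI
    have hgc : ContinuousOn g (Icc (0:ℝ) b) :=
      ((continuousOn_const.mul hξcb).mul hξ'cb).mul hct |>.add ((hξcb.pow 2).mul hcc)
    have hgint : IntervalIntegrable g volume 0 b := by
      apply ContinuousOn.intervalIntegrable
      rwa [uIcc_of_le hb.1]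
    have hFc : ContinuousOn F (Icc (0:ℝ) b) := (hξcb.pow 2).mul hct
    have hF' : ∀ x ∈ Ioo (0:ℝ) b, HasDerivWithinAt F (g x) (Ioi x) x := by
      intro x hx
      have hmem : Icc (0:ℝ) (π/2) ∈ nhds x :=
        Icc_mem_nhds hx.1 (lt_of_lt_of_le hx.2 hb.2.le)
      have hξd : HasDerivAt ξ (ξ' x) x := (hderiv x (hbI ⟨hx.1.le, hx.2.le⟩)).hasDerivAt hmem
      have htd : HasDerivAt Real.tan (1 / Real.cos x ^ 2) x :=
        Real.hasDerivAt_tan (hcos x ⟨hx.1.le, hx.2.le⟩).ne'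
      have : HasDerivAt F ((2 * ξ x ^ 1 * ξ' x) * Real.tan x + (ξ x) ^ 2 * (1 / Real.cos x ^ 2))
          x := (hξd.pow 2).mul htd
      have h2 : (2 * ξ x ^ 1 * ξ' x) * Real.tan x + (ξ x) ^ 2 * (1 / Real.cos x ^ 2) = g x := by
        simp only [hg, pow_one]
      rw [h2] at this
      exact this.hasDerivWithinAt
    have hFTC : ∫ x in (0:ℝ)..b, g x = F b - F 0 :=
      integral_eq_sub_of_hasDeriv_right_of_le hb.1 hFc hF' hgint
    have hF0 : F 0 = 0 := by simp [hF]
    -- pointwise identity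
    have hpt : ∀ x ∈ uIcc (0:ℝ) b,
        (ξ' x + ξ x * Real.tan x) ^ 2 = (ξ' x) ^ 2 - (ξ x) ^ 2 + g x := by
      intro x hx
      rw [uIcc_of_le hb.1] at hx
      have hne := (hcos x hx).ne'
      have h1 : (1:ℝ) / Real.cos x ^ 2 = 1 + Real.tan x ^ 2 := by
        rw [one_div, ← Real.inv_one_add_tan_sq hne, inv_inv]
      simp only [hg, h1]; ring
    have hnn : 0 ≤ ∫ x in (0:ℝ)..b, (ξ' x + ξ x * Real.tan x) ^ 2 :=
      integral_nonneg hb.1 (fun x _ => sq_nonneg _)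
    have hξint : IntervalIntegrable (fun x => (ξ x)^2) volume 0 b := by
      apply ContinuousOn.intervalIntegrable; rw [uIcc_of_le hb.1]; exact hξcb.pow 2
    have hξ'int : IntervalIntegrable (fun x => (ξ' x)^2) volume 0 b := by
      apply ContinuousOn.intervalIntegrable; rw [uIcc_of_le hb.1]; exact hξ'cb.pow 2
    have hsplit : ∫ x in (0:ℝ)..b, (ξ' x + ξ x * Real.tan x) ^ 2
        = (∫ x in (0:ℝ)..b, (ξ' x)^2) - (∫ x in (0:ℝ)..b, (ξ x)^2) + ∫ x in (0:ℝ)..b, g x := by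
      rw [integral_congr hpt, integral_add (hξ'int.sub hξint) hgint, integral_sub hξ'int hξint]
    rw [hsplit, hFTC, hF0, sub_zero] at hnn
    linarith
  -- limits
  have hl : (𝓝[Ico (0:ℝ) (π/2)] (π/2)) = 𝓝[<] (π/2) := nhdsWithin_Ico_eq_nhdsLT hπ
  have hIcc : 𝓝[<] (π/2) ≤ 𝓝[Icc (0:ℝ) (π/2)] (π/2) := by
    rw [← hl]; exact nhdsWithin_mono _ Ico_subset_Icc_self
  have hev : ∀ᶠ b in 𝓝[<] (π/2), b ∈ Ico (0:ℝ) (π/2) := by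
    rw [← hl]; exact eventually_mem_nhdsWithin
  have htendξ : Tendsto (fun b => ∫ x in (0:ℝ)..b, (ξ x)^2) (𝓝[<] (π/2))
      (𝓝 (∫ x in (0:ℝ)..(π/2), (ξ x)^2)) := by
    have h := (continuousOn_primitive_interval (f := fun x => (ξ x)^2) (μ := volume) (a := 0)
      (b := π/2) (by rw [uIcc_of_le hπ.le]; exact (hξc.pow 2).integrableOn_compact isCompact_Icc))
      (π/2) (by rw [uIcc_of_le hπ.le]; exact ⟨hπ.le, le_rfl⟩)
    exact h.tendsto.mono_left (hIcc.trans_eq (by rw [uIcc_of_le hπ.le]))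
  have htendξ' : Tendsto (fun b => ∫ x in (0:ℝ)..b, (ξ' x)^2) (𝓝[<] (π/2))
      (𝓝 (∫ x in (0:ℝ)..(π/2), (ξ' x)^2)) := by
    have h := (continuousOn_primitive_interval (f := fun x => (ξ' x)^2) (μ := volume) (a := 0)
      (b := π/2) (by rw [uIcc_of_le hπ.le]; exact (hcont.pow 2).integrableOn_compact isCompact_Icc))
      (π/2) (by rw [uIcc_of_le hπ.le]; exact ⟨hπ.le, le_rfl⟩)
    exact h.tendsto.mono_left (hIcc.trans_eq (by rw [uIcc_of_le hπ.le]))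
  -- F tends to 0
  have htendF : Tendsto F (𝓝[<] (π/2)) (𝓝 0) := by
    have hbound : ∀ b ∈ Ico (0:ℝ) (π/2), F b ≤ (M^2 * (π/2)) * (π/2 - b) := by
      intro b hb
      have hbb : b ∈ Icc (0:ℝ) (π/2) := ⟨hb.1, hb.2.le⟩
      have hsb : 0 < π/2 - b := by linarith [hb.2]
      have hcosb : Real.cos b ≥ 2/π * (π/2 - b) := by
        have := Real.mul_le_sin (x := π/2 - b) hsb.le (by linarith [hb.1])
        rwa [Real.sin_pi_div_two_sub] at this
      have hcosb0 : 0 < Real.cos b := lt_of_lt_of_le (by positivity) hcosb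
      have htan : Real.tan b ≤ π / (2 * (π/2 - b)) := by
        rw [Real.tan_eq_sin_div_cos]
        have h1 : Real.sin b ≤ 1 := Real.sin_le_one b
        have h2 : Real.sin b / Real.cos b ≤ 1 / Real.cos b := by
          gcongr
        refine h2.trans ?_
        rw [div_le_div_iff₀ hcosb0 (by positivity)]
        calc 1 * (2 * (π/2 - b)) = π * (2/π * (π/2 - b)) := by field_simp
          _ ≤ π * Real.cos b := by nlinarith [pi_pos, hcosb]
      have htan0 : 0 ≤ Real.tan b := by
        rw [Real.tan_eq_sin_div_cos]
        exact div_nonneg (Real.sin_nonneg_of_nonneg_of_le_pi hb.1 (by linarith [pi_pos, hb.2]))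
          hcosb0.le
      have hξb : (ξ b)^2 ≤ M^2 * (π/2 - b)^2 := by
        have := hlip b hbb
        nlinarith [abs_nonneg (ξ b), sq_abs (ξ b)]
      calc F b = (ξ b)^2 * Real.tan b := rfl
        _ ≤ (M^2 * (π/2 - b)^2) * (π / (2 * (π/2 - b))) := by
            apply mul_le_mul hξb htan htan0 (by positivity)
        _ = (M^2 * (π/2)) * (π/2 - b) := by
            have hne2 : 2 * (π/2 - b) ≠ 0 := by positivity
            rw [← mul_div_assoc, div_eq_iff hne2]
            ring
    have hFnn : ∀ b ∈ Ico (0:ℝ) (π/2), 0 ≤ F b := by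
      intro b hb
      have hcosb0 : 0 < Real.cos b :=
        Real.cos_pos_of_mem_Ioo ⟨by linarith [hb.1, hπ], hb.2⟩
      have htan0 : 0 ≤ Real.tan b := by
        rw [Real.tan_eq_sin_div_cos]
        exact div_nonneg (Real.sin_nonneg_of_nonneg_of_le_pi hb.1 (by linarith [pi_pos, hb.2]))
          hcosb0.le
      exact mul_nonneg (sq_nonneg _) htan0
    have hub : Tendsto (fun b : ℝ => (M^2 * (π/2)) * (π/2 - b)) (𝓝[<] (π/2)) (𝓝 0) := by
      have : Tendsto (fun b : ℝ => (M^2 * (π/2)) * (π/2 - b)) (𝓝 (π/2))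
          (𝓝 ((M^2 * (π/2)) * (π/2 - π/2))) := by
        exact (tendsto_const_nhds.mul (tendsto_const_nhds.sub tendsto_id))
      simpa using this.mono_left nhdsWithin_le_nhds
    apply tendsto_of_tendsto_of_tendsto_of_le_of_le' tendsto_const_nhds hub
    · exact hev.mono (fun b hb => hFnn b hb)
    · exact hev.mono (fun b hb => hbound b hb)
  -- conclude
  have : Tendsto (fun b => (∫ x in (0:ℝ)..b, (ξ' x)^2) + F b) (𝓝[<] (π/2))
      (𝓝 ((∫ x in (0:ℝ)..(π/2), (ξ' x)^2) + 0)) := htendξ'.add htendF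
  rw [add_zero] at this
  exact le_of_tendsto_of_tendsto htendξ this (hev.mono (fun b hb => key b hb))

/-- Wirtinger-type inequality for functions vanishing at the midpoint of `[0,π]`
(used in Proposition 5.6 of the paper): if `ξ` is `C¹` on `[0,π]` with `ξ(π/2) = 0`,
then `∫₀^π ξ'² ≥ ∫₀^π ξ²`. -/
theorem stmt_5 (ξ ξ' : ℝ → ℝ)
    (hderiv : ∀ x ∈ Set.Icc (0 : ℝ) π, HasDerivWithinAt ξ (ξ' x) (Set.Icc (0 : ℝ) π) x)
    (hcont : ContinuousOn ξ' (Set.Icc (0 : ℝ) π))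
    (hmid : ξ (π / 2) = 0) :
    ∫ x in (0 : ℝ)..π, (ξ x) ^ 2 ≤ ∫ x in (0 : ℝ)..π, (ξ' x) ^ 2 := by
  have hπ : (0:ℝ) < π := pi_pos
  have hsub1 : Icc (0:ℝ) (π/2) ⊆ Icc 0 π := Icc_subset_Icc le_rfl (by linarith)
  have hξc : ContinuousOn ξ (Icc 0 π) := fun x hx => (hderiv x hx).continuousWithinAt
  -- first half
  have h1 := half_wirtinger ξ ξ'
    (fun x hx => (hderiv x (hsub1 hx)).mono hsub1) (hcont.mono hsub1) hmid
  -- second half, by reflection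
  set η : ℝ → ℝ := fun x => ξ (π - x) with hη
  set η' : ℝ → ℝ := fun x => -ξ' (π - x) with hη'
  have hmap : MapsTo (fun x : ℝ => π - x) (Icc 0 (π/2)) (Icc 0 π) := by
    intro x hx
    simp only [mem_Icc] at hx ⊢
    constructor <;> linarith [hx.1, hx.2]
  have hd2 : ∀ x ∈ Icc (0:ℝ) (π/2), HasDerivWithinAt η (η' x) (Icc 0 (π/2)) x := by
    intro x hx
    have hi : HasDerivWithinAt (fun y : ℝ => π - y) (-1) (Icc 0 (π/2)) x :=
      (hasDerivWithinAt_id x _).const_sub π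
    have ho := hderiv (π - x) (hmap hx)
    have hcomp := HasDerivWithinAt.comp x ho hi hmap
    have : ξ' (π - x) * (-1) = η' x := by simp [hη']
    rw [this] at hcomp
    exact hcomp
  have hc2 : ContinuousOn η' (Icc (0:ℝ) (π/2)) :=
    (hcont.comp ((continuous_const.sub continuous_id).continuousOn) hmap).neg
  have hm2 : η (π/2) = 0 := by
    show ξ (π - π/2) = 0
    rw [show π - π/2 = π/2 by ring, hmid]
  have h2 := half_wirtinger η η' hd2 hc2 hm2
  -- rewrite the reflected integrals
  have e1 : (∫ x in (0:ℝ)..(π/2), (η x)^2) = ∫ x in (π/2)..π, (ξ x)^2 := by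
    have := intervalIntegral.integral_comp_sub_left (a := (0:ℝ)) (b := π/2)
      (fun y => (ξ y)^2) π
    simp only [sub_zero] at this
    rw [show π - π/2 = π/2 by ring] at this
    exact this
  have e2 : (∫ x in (0:ℝ)..(π/2), (η' x)^2) = ∫ x in (π/2)..π, (ξ' x)^2 := by
    have := intervalIntegral.integral_comp_sub_left (a := (0:ℝ)) (b := π/2)
      (fun y => (ξ' y)^2) π
    simp only [sub_zero] at this
    rw [show π - π/2 = π/2 by ring] at this
    rw [← this]
    apply intervalIntegral.integral_congr
    intro x _
    simp [hη']
  rw [e1] at h2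
  rw [e2] at h2
  -- split the integrals
  have hint : ∀ (f : ℝ → ℝ), ContinuousOn f (Icc 0 π) →
      (∫ x in (0:ℝ)..π, (f x)^2) = (∫ x in (0:ℝ)..(π/2), (f x)^2) + ∫ x in (π/2)..π, (f x)^2 := by
    intro f hf
    rw [intervalIntegral.integral_add_adjacent_intervals]
    · apply ContinuousOn.intervalIntegrable
      rw [uIcc_of_le (by linarith)]
      exact (hf.mono hsub1).pow 2
    · apply ContinuousOn.intervalIntegrable
      rw [uIcc_of_le (by linarith)]
      exact (hf.mono (Icc_subset_Icc (by linarith) le_rfl)).pow 2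
  rw [hint ξ hξc, hint ξ' hcont]
  linarith
end

section
/- Let g : [−π/2, π/2] → ℝ be a C¹ function which is odd, i.e. g(−t) = −g(t) for all t ∈ [−π/2, π/2]. Then ∫_{−π/2}^{π/2} g'(t)² dt ≥ ∫_{−π/2}^{π/2} g(t)² dt. -/
open Real
open Set intervalIntegral

lemma wirtinger_half (g g' : ℝ → ℝ)
    (hd : ∀ t ∈ Set.Icc (0:ℝ) (π/2), HasDerivWithinAt g (g' t) (Set.Icc (0:ℝ) (π/2)) t)
    (hc : ContinuousOn g' (Set.Icc (0:ℝ) (π/2)))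
    (h0 : g 0 = 0) :
    ∫ t in (0:ℝ)..(π/2), (g t) ^ 2 ≤ ∫ t in (0:ℝ)..(π/2), (g' t) ^ 2 := by
  have hπ : (0:ℝ) < π/2 := pi_div_two_pos
  have hgc : ContinuousOn g (Icc (0:ℝ) (π/2)) := fun t ht => (hd t ht).continuousWithinAt
  -- bound on g'
  obtain ⟨C₀, hC₀⟩ := (isCompact_Icc (a := (0:ℝ)) (b := π/2)).exists_bound_of_continuousOn hc
  set C := max C₀ 0 with hCdef
  have hC : ∀ x ∈ Icc (0:ℝ) (π/2), ‖g' x‖ ≤ C := fun x hx => (hC₀ x hx).trans (le_max_left _ _)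
  have hC0 : 0 ≤ C := le_max_right _ _
  -- |g ε| ≤ C ε
  have hglin : ∀ ε ∈ Icc (0:ℝ) (π/2), |g ε| ≤ C * ε := by
    intro ε hε
    have := (convex_Icc (0:ℝ) (π/2)).norm_image_sub_le_of_norm_hasDerivWithin_le
      hd hC (left_mem_Icc.2 hπ.le) hε
    simpa [h0, Real.norm_eq_abs, abs_of_nonneg hε.1] using this
  -- bound on h := g'^2 - g^2
  set h : ℝ → ℝ := fun t => g' t ^ 2 - g t ^ 2 with hhdef
  have hhc : ContinuousOn h (Icc (0:ℝ) (π/2)) := by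
    exact ((hc.pow 2).sub (hgc.pow 2))
  obtain ⟨M₀, hM₀⟩ := (isCompact_Icc (a := (0:ℝ)) (b := π/2)).exists_bound_of_continuousOn hhc
  set M := max M₀ 0 with hMdef
  have hM : ∀ x ∈ Icc (0:ℝ) (π/2), ‖h x‖ ≤ M := fun x hx => (hM₀ x hx).trans (le_max_left _ _)
  have hM0 : 0 ≤ M := le_max_right _ _
  -- F and P
  set F : ℝ → ℝ := fun t => g t ^ 2 * (cos t / sin t) with hFdef
  set P : ℝ → ℝ := fun t => (g' t - g t * (cos t / sin t)) ^ 2 with hPdef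
  -- main estimate on [ε, π/2]
  have key : ∀ ε ∈ Ioc (0:ℝ) (π/2), -((C^2 * (π/2) + M) * ε) ≤ ∫ t in (0:ℝ)..(π/2), h t := by
    intro ε hε
    have hεI : Icc ε (π/2) ⊆ Icc (0:ℝ) (π/2) := Icc_subset_Icc hε.1.le le_rfl
    have hsin : ∀ t ∈ Icc ε (π/2), 0 < sin t := by
      intro t ht
      exact Real.sin_pos_of_pos_of_lt_pi (lt_of_lt_of_le hε.1 ht.1)
        (lt_of_le_of_lt ht.2 (by linarith [pi_pos]))
    have hcossin : ContinuousOn (fun t => cos t / sin t) (Icc ε (π/2)) :=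
      (Real.continuous_cos.continuousOn).div (Real.continuous_sin.continuousOn)
        (fun t ht => (hsin t ht).ne')
    have hFc : ContinuousOn F (Icc ε (π/2)) :=
      ((hgc.mono hεI).pow 2).mul hcossin
    have hPc : ContinuousOn P (Icc ε (π/2)) :=
      (((hc.mono hεI).sub ((hgc.mono hεI).mul hcossin)).pow 2)
    have hhc' : ContinuousOn h (Icc ε (π/2)) := hhc.mono hεI
    -- derivative of F on the open interval
    have hFd : ∀ t ∈ Ioo ε (π/2), HasDerivWithinAt F (h t - P t) (Ioi t) t := by
      intro t ht
      have htI : t ∈ Icc (0:ℝ) (π/2) := hεI (Ioo_subset_Icc_self ht)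
      have hnhds : Icc (0:ℝ) (π/2) ∈ nhds t :=
        Icc_mem_nhds (lt_of_lt_of_le hε.1 ht.1.le) ht.2
      have hgd : HasDerivAt g (g' t) t := (hd t htI).hasDerivAt hnhds
      have hst : sin t ≠ 0 :=
        (Real.sin_pos_of_pos_of_lt_pi (lt_of_lt_of_le hε.1 ht.1.le)
          (lt_trans ht.2 (by linarith [pi_pos]))).ne'
      have hq : HasDerivAt (fun t => cos t / sin t)
          ((-sin t * sin t - cos t * cos t) / (sin t) ^ 2) t :=
        (Real.hasDerivAt_cos t).div (Real.hasDerivAt_sin t) hst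
      have hg2 : HasDerivAt (fun t => g t ^ 2) (2 * g t * g' t) t := by
        simpa using hgd.fun_pow 2
      have hF : HasDerivAt F
          ((2 * g t * g' t) * (cos t / sin t)
            + g t ^ 2 * ((-sin t * sin t - cos t * cos t) / (sin t) ^ 2)) t := hg2.mul hq
      have heq : (2 * g t * g' t) * (cos t / sin t)
            + g t ^ 2 * ((-sin t * sin t - cos t * cos t) / (sin t) ^ 2) = h t - P t := by
        have hsc : sin t ^ 2 + cos t ^ 2 = 1 := Real.sin_sq_add_cos_sq t
        simp only [hhdef, hPdef]
        field_simp
        ring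
      exact (heq ▸ hF).hasDerivWithinAt
    have hint : IntervalIntegrable (fun t => h t - P t) MeasureTheory.volume ε (π/2) := by
      apply ContinuousOn.intervalIntegrable
      rw [uIcc_of_le hε.2]
      exact hhc'.sub hPc
    have hFTC := intervalIntegral.integral_eq_sub_of_hasDeriv_right_of_le hε.2 hFc hFd hint
    have hFpi : F (π/2) = 0 := by simp [hFdef, Real.cos_pi_div_two]
    -- ∫_ε h = ∫ (h-P) + ∫ P ≥ -F ε
    have hintP : IntervalIntegrable P MeasureTheory.volume ε (π/2) := by
      apply ContinuousOn.intervalIntegrable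
      rwa [uIcc_of_le hε.2]
    have hinth : IntervalIntegrable h MeasureTheory.volume ε (π/2) := by
      apply ContinuousOn.intervalIntegrable
      rwa [uIcc_of_le hε.2]
    have hsplit : (∫ t in ε..(π/2), h t)
        = (∫ t in ε..(π/2), (h t - P t)) + ∫ t in ε..(π/2), P t := by
      rw [← intervalIntegral.integral_add hint hintP]
      congr 1; funext t; ring
    have hPnn : 0 ≤ ∫ t in ε..(π/2), P t :=
      intervalIntegral.integral_nonneg hε.2 (fun t _ => sq_nonneg _)
    have h1 : -(F ε) ≤ ∫ t in ε..(π/2), h t := by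
      rw [hsplit, hFTC, hFpi]
      linarith
    -- F ε ≤ C^2 * (π/2) * ε
    have hFε : F ε ≤ C ^ 2 * (π/2) * ε := by
      have hεI0 : ε ∈ Icc (0:ℝ) (π/2) := ⟨hε.1.le, hε.2⟩
      have hsε : 2 / π * ε ≤ sin ε := Real.mul_le_sin hε.1.le hε.2
      have hε0 : (0:ℝ) < ε := hε.1
      have hsε0 : 0 < sin ε := lt_of_lt_of_le (mul_pos (by positivity) hε0) hsε
      have hg2 : g ε ^ 2 ≤ (C * ε) ^ 2 := by
        have := hglin ε hεI0
        nlinarith [abs_nonneg (g ε), sq_abs (g ε)]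
      have h2e : 2 * ε ≤ π * sin ε := by
        have h := mul_le_mul_of_nonneg_left hsε pi_pos.le
        have hππ : π * (2 / π * ε) = 2 * ε := by
          field_simp
        linarith
      have hq : cos ε / sin ε ≤ π / (2*ε) := by
        rw [div_le_div_iff₀ hsε0 (by linarith)]
        nlinarith [Real.cos_le_one ε]
      have hcnn : 0 ≤ cos ε / sin ε :=
        div_nonneg (Real.cos_nonneg_of_mem_Icc ⟨by linarith [pi_pos], hε.2⟩) hsε0.le
      have hFle : F ε ≤ (C*ε)^2 * (π/(2*ε)) :=
        mul_le_mul hg2 hq hcnn (sq_nonneg _)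
      have hEq : (C*ε)^2 * (π/(2*ε)) = C^2 * (π/2) * ε := by
        field_simp [hε0.ne']
      linarith
    -- ∫_0^ε h bound
    have hadj : (∫ t in (0:ℝ)..(π/2), h t)
        = (∫ t in (0:ℝ)..ε, h t) + ∫ t in ε..(π/2), h t := by
      rw [intervalIntegral.integral_add_adjacent_intervals]
      · apply ContinuousOn.intervalIntegrable
        rw [uIcc_of_le hε.1.le]
        exact hhc.mono (Icc_subset_Icc le_rfl hε.2)
      · apply ContinuousOn.intervalIntegrable
        rwa [uIcc_of_le hε.2]
    have hsmall : |∫ t in (0:ℝ)..ε, h t| ≤ M * ε := by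
      have := intervalIntegral.norm_integral_le_of_norm_le_const
        (f := h) (C := M) (a := (0:ℝ)) (b := ε) ?_
      · simpa [abs_of_nonneg hε.1.le] using this
      · intro x hx
        rw [uIoc_of_le hε.1.le] at hx
        exact hM x ⟨hx.1.le, hx.2.trans hε.2⟩
    calc -((C^2 * (π/2) + M) * ε) = -(C^2 * (π/2) * ε) + -(M * ε) := by ring
      _ ≤ -(F ε) + ∫ t in (0:ℝ)..ε, h t := by
          have := abs_le.mp hsmall
          linarith
      _ ≤ (∫ t in ε..(π/2), h t) + ∫ t in (0:ℝ)..ε, h t := by linarith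
      _ = ∫ t in (0:ℝ)..(π/2), h t := by rw [hadj]; ring
  have hA : 0 ≤ ∫ t in (0:ℝ)..(π/2), h t := by
    have htend : Filter.Tendsto (fun ε : ℝ => -((C^2*(π/2)+M)*ε))
        (nhdsWithin 0 (Ioi 0)) (nhds 0) := by
      have h1 : Filter.Tendsto (fun ε : ℝ => -((C^2*(π/2)+M)*ε)) (nhds 0)
          (nhds (-((C^2*(π/2)+M)*0))) := by
        exact ((continuous_const.mul continuous_id).neg.tendsto (0:ℝ))
      simpa using h1.mono_left nhdsWithin_le_nhds
    refine le_of_tendsto htend ?_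
    filter_upwards [Ioc_mem_nhdsGT_of_mem (⟨le_refl 0, hπ⟩ : (0:ℝ) ∈ Ico 0 (π/2))] with ε hε
    exact key ε hε
  have hint1 : IntervalIntegrable (fun t => g' t ^ 2) MeasureTheory.volume 0 (π/2) := by
    apply ContinuousOn.intervalIntegrable
    rw [uIcc_of_le hπ.le]
    exact hc.pow 2
  have hint2 : IntervalIntegrable (fun t => g t ^ 2) MeasureTheory.volume 0 (π/2) := by
    apply ContinuousOn.intervalIntegrable
    rw [uIcc_of_le hπ.le]
    exact hgc.pow 2
  have hsub : (∫ t in (0:ℝ)..(π/2), h t)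
      = (∫ t in (0:ℝ)..(π/2), g' t ^ 2) - ∫ t in (0:ℝ)..(π/2), g t ^ 2 :=
    intervalIntegral.integral_sub hint1 hint2
  linarith

/-- Wirtinger-type inequality for odd `C¹` functions on `[−π/2, π/2]` (used for the
antisymmetric part in the proof of Theorem 5.8 of the paper): if `g(−t) = −g(t)`, then
`∫ g'² ≥ ∫ g²` over `[−π/2, π/2]`. -/
theorem stmt_6 (g g' : ℝ → ℝ)
    (hderiv : ∀ t ∈ Set.Icc (-(π / 2)) (π / 2),
      HasDerivWithinAt g (g' t) (Set.Icc (-(π / 2)) (π / 2)) t)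
    (hcont : ContinuousOn g' (Set.Icc (-(π / 2)) (π / 2)))
    (hodd : ∀ t ∈ Set.Icc (-(π / 2)) (π / 2), g (-t) = -g t) :
    ∫ t in (-(π / 2))..(π / 2), (g t) ^ 2 ≤ ∫ t in (-(π / 2))..(π / 2), (g' t) ^ 2 := by
  have hπ : (0:ℝ) < π/2 := pi_div_two_pos
  have h0mem : (0:ℝ) ∈ Icc (-(π/2)) (π/2) := ⟨by linarith, hπ.le⟩
  have hg0 : g 0 = 0 := by
    have := hodd 0 h0mem
    simp only [neg_zero] at this
    linarith
  have hgc : ContinuousOn g (Icc (-(π/2)) (π/2)) :=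
    fun t ht => (hderiv t ht).continuousWithinAt
  -- right half
  have hsub : Icc (0:ℝ) (π/2) ⊆ Icc (-(π/2)) (π/2) := Icc_subset_Icc (by linarith) le_rfl
  have hdR : ∀ t ∈ Icc (0:ℝ) (π/2), HasDerivWithinAt g (g' t) (Icc (0:ℝ) (π/2)) t :=
    fun t ht => (hderiv t (hsub ht)).mono hsub
  have hR := wirtinger_half g g' hdR (hcont.mono hsub) hg0
  -- left half via reflection
  set G : ℝ → ℝ := fun t => g (-t) with hGdef
  set G' : ℝ → ℝ := fun t => -(g' (-t)) with hG'def
  have hmaps : Set.MapsTo (fun t : ℝ => -t) (Icc (0:ℝ) (π/2)) (Icc (-(π/2)) (π/2)) := by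
    intro t ht
    exact ⟨by simpa using neg_le_neg ht.2, by linarith [ht.1]⟩
  have hdG : ∀ t ∈ Icc (0:ℝ) (π/2), HasDerivWithinAt G (G' t) (Icc (0:ℝ) (π/2)) t := by
    intro t ht
    have h1 := hderiv (-t) (hmaps ht)
    have h2 : HasDerivWithinAt (fun t : ℝ => -t) (-1) (Icc (0:ℝ) (π/2)) t :=
      (hasDerivAt_neg t).hasDerivWithinAt
    have h3 := HasDerivWithinAt.comp t h1 h2 hmaps
    have : g' (-t) * (-1) = G' t := by simp [hG'def]
    rw [this] at h3
    exact h3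
  have hcG : ContinuousOn G' (Icc (0:ℝ) (π/2)) :=
    (hcont.comp continuous_neg.continuousOn hmaps).neg
  have hG0 : G 0 = 0 := by simp [hGdef, hg0]
  have hL := wirtinger_half G G' hdG hcG hG0
  -- translate the reflected integrals
  have e1 : (∫ t in (0:ℝ)..(π/2), (G t) ^ 2) = ∫ t in (-(π/2))..(0:ℝ), (g t) ^ 2 := by
    have := intervalIntegral.integral_comp_neg (a := (0:ℝ)) (b := π/2)
      (f := fun t => (g t) ^ 2)
    simpa [hGdef] using this
  have e2 : (∫ t in (0:ℝ)..(π/2), (G' t) ^ 2) = ∫ t in (-(π/2))..(0:ℝ), (g' t) ^ 2 := by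
    have := intervalIntegral.integral_comp_neg (a := (0:ℝ)) (b := π/2)
      (f := fun t => (g' t) ^ 2)
    simpa [hG'def, neg_sq] using this
  rw [e1, e2] at hL
  -- split the full integrals
  have hsubL : Icc (-(π/2)) (0:ℝ) ⊆ Icc (-(π/2)) (π/2) := Icc_subset_Icc le_rfl hπ.le
  have i1 : IntervalIntegrable (fun t => (g t) ^ 2) MeasureTheory.volume (-(π/2)) 0 := by
    apply ContinuousOn.intervalIntegrable
    rw [uIcc_of_le (by linarith)]
    exact (hgc.mono hsubL).pow 2
  have i2 : IntervalIntegrable (fun t => (g t) ^ 2) MeasureTheory.volume 0 (π/2) := by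
    apply ContinuousOn.intervalIntegrable
    rw [uIcc_of_le hπ.le]
    exact (hgc.mono hsub).pow 2
  have i3 : IntervalIntegrable (fun t => (g' t) ^ 2) MeasureTheory.volume (-(π/2)) 0 := by
    apply ContinuousOn.intervalIntegrable
    rw [uIcc_of_le (by linarith)]
    exact (hcont.mono hsubL).pow 2
  have i4 : IntervalIntegrable (fun t => (g' t) ^ 2) MeasureTheory.volume 0 (π/2) := by
    apply ContinuousOn.intervalIntegrable
    rw [uIcc_of_le hπ.le]
    exact (hcont.mono hsub).pow 2
  have s1 := intervalIntegral.integral_add_adjacent_intervals i1 i2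
  have s2 := intervalIntegral.integral_add_adjacent_intervals i3 i4
  rw [← s1, ← s2]
  exact add_le_add hL hR
end

section
/- Let (x_n)_{n≥0} be a sequence of real numbers such that the series ∑_{n=1}^∞ (−1)^{n+1} x_n converges with x_0 = 2·∑_{n=1}^∞ (−1)^{n+1} x_n, and such that ∑_{n=1}^∞ (4n²−1)·x_n² < ∞. Then −(1/2)·x_0² + ∑_{n=1}^∞ (4n²−1)·x_n² ≥ 0. -/
open Filter

/-- Lemma 5.9 of the paper: if `x₀ = 2 ∑_{n≥1} (−1)^{n+1} xₙ` (convergent series) and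
`∑_{n≥1} (4n²−1) xₙ² < ∞`, then `−(1/2) x₀² + ∑_{n≥1} (4n²−1) xₙ² ≥ 0`. -/
theorem stmt_9 (x : ℕ → ℝ) (S : ℝ)
    (hconv : Tendsto (fun N => ∑ n ∈ Finset.range N, (-1 : ℝ) ^ n * x (n + 1))
      atTop (nhds S))
    (hx0 : x 0 = 2 * S)
    (hsum : Summable (fun n : ℕ => (4 * (n + 1 : ℝ) ^ 2 - 1) * x (n + 1) ^ 2)) :
    0 ≤ -(1 / 2) * x 0 ^ 2 + ∑' n : ℕ, (4 * (n + 1 : ℝ) ^ 2 - 1) * x (n + 1) ^ 2 := by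
  set T := ∑' n : ℕ, (4 * (n + 1 : ℝ) ^ 2 - 1) * x (n + 1) ^ 2 with hT
  set w : ℕ → ℝ := fun n => 4 * (n + 1 : ℝ) ^ 2 - 1 with hw
  have hwpos : ∀ n : ℕ, 0 < w n := by
    intro n
    simp only [hw]
    have : (0 : ℝ) ≤ (n : ℝ) := n.cast_nonneg
    nlinarith
  have hterm_nonneg : ∀ n : ℕ, 0 ≤ w n * x (n + 1) ^ 2 := fun n =>
    mul_nonneg (hwpos n).le (sq_nonneg _)
  have hTnonneg : 0 ≤ T := tsum_nonneg hterm_nonneg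
  -- key: S ^ 2 ≤ (1/2) * T
  have key : S ^ 2 ≤ 1 / 2 * T := by
    have hbound : ∀ N : ℕ,
        (∑ n ∈ Finset.range N, (-1 : ℝ) ^ n * x (n + 1)) ^ 2 ≤ 1 / 2 * T := by
      intro N
      set f : ℕ → ℝ := fun n => (-1 : ℝ) ^ n / Real.sqrt (w n) with hf
      set g : ℕ → ℝ := fun n => Real.sqrt (w n) * x (n + 1) with hg
      have hsq : ∀ n, Real.sqrt (w n) ^ 2 = w n := fun n => Real.sq_sqrt (hwpos n).le
      have hsne : ∀ n, Real.sqrt (w n) ≠ 0 := fun n =>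
        ne_of_gt (Real.sqrt_pos.2 (hwpos n))
      have hfg : ∀ n, (-1 : ℝ) ^ n * x (n + 1) = f n * g n := by
        intro n
        simp only [hf, hg]
        rw [div_mul_eq_mul_div, mul_comm (Real.sqrt (w n)) (x (n + 1)), ← mul_assoc,
          mul_div_assoc, div_self (hsne n), mul_one]
      have hcs := Finset.sum_mul_sq_le_sq_mul_sq (Finset.range N) f g
      have hfsum : ∑ n ∈ Finset.range N, f n ^ 2 ≤ 1 / 2 := by
        have heq : ∀ n, f n ^ 2 = 1 / 2 * (1 / (2 * (n : ℝ) + 1)) - 1 / 2 * (1 / (2 * ((n : ℝ) + 1) + 1)) := by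
          intro n
          have h1 : (0 : ℝ) < 2 * (n : ℝ) + 1 := by positivity
          have h2 : (0 : ℝ) < 2 * ((n : ℝ) + 1) + 1 := by positivity
          have hne1 : ((-1 : ℝ) ^ n) ^ 2 = 1 := by
            rw [← pow_mul, mul_comm, pow_mul]; norm_num
          have : f n ^ 2 = 1 / w n := by
            simp only [hf, div_pow, hsq, hne1]
          rw [this]
          have hwe : w n = (2 * (n : ℝ) + 1) * (2 * ((n : ℝ) + 1) + 1) := by
            simp only [hw]; ring
          rw [hwe]
          field_simp
          ring
        calc ∑ n ∈ Finset.range N, f n ^ 2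
            = ∑ n ∈ Finset.range N, ((fun k : ℕ => 1 / 2 * (1 / (2 * (k : ℝ) + 1))) n
              - (fun k : ℕ => 1 / 2 * (1 / (2 * (k : ℝ) + 1))) (n + 1)) := by
              refine Finset.sum_congr rfl fun n _ => ?_
              rw [heq n]; push_cast; ring_nf
          _ = 1 / 2 * (1 / (2 * (0 : ℝ) + 1)) - 1 / 2 * (1 / (2 * (N : ℝ) + 1)) := by
              rw [Finset.sum_range_sub' (fun k : ℕ => 1 / 2 * (1 / (2 * (k : ℝ) + 1))) N]
              norm_num
          _ ≤ 1 / 2 := by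
              have : (0 : ℝ) < 2 * (N : ℝ) + 1 := by positivity
              have : 0 ≤ 1 / 2 * (1 / (2 * (N : ℝ) + 1)) := by positivity
              norm_num
              linarith
      have hgsum : ∑ n ∈ Finset.range N, g n ^ 2 ≤ T := by
        have heq : ∀ n, g n ^ 2 = w n * x (n + 1) ^ 2 := by
          intro n; simp only [hg, mul_pow, hsq]
        calc ∑ n ∈ Finset.range N, g n ^ 2 = ∑ n ∈ Finset.range N, w n * x (n + 1) ^ 2 :=
              Finset.sum_congr rfl fun n _ => heq n
          _ ≤ T := Summable.sum_le_tsum (Finset.range N) (fun n _ => hterm_nonneg n) hsum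
      have hfnn : 0 ≤ ∑ n ∈ Finset.range N, f n ^ 2 :=
        Finset.sum_nonneg fun n _ => sq_nonneg _
      have hgnn : 0 ≤ ∑ n ∈ Finset.range N, g n ^ 2 :=
        Finset.sum_nonneg fun n _ => sq_nonneg _
      calc (∑ n ∈ Finset.range N, (-1 : ℝ) ^ n * x (n + 1)) ^ 2
          = (∑ n ∈ Finset.range N, f n * g n) ^ 2 := by
            congr 1; exact Finset.sum_congr rfl fun n _ => hfg n
        _ ≤ (∑ n ∈ Finset.range N, f n ^ 2) * ∑ n ∈ Finset.range N, g n ^ 2 := hcs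
        _ ≤ 1 / 2 * T := mul_le_mul hfsum hgsum hgnn (by norm_num)
    have hlim : Tendsto (fun N => (∑ n ∈ Finset.range N, (-1 : ℝ) ^ n * x (n + 1)) ^ 2)
        atTop (nhds (S ^ 2)) := hconv.pow 2
    exact le_of_tendsto hlim (Eventually.of_forall hbound)
  rw [hx0]
  nlinarith [key]
end

section
/- For every integer n ≥ 1 and all real numbers x_1, …, x_n, the following identity holds: −(1/2)·(∑_{i=1}^n 2(−1)^{i+1} x_i)² + ∑_{i=1}^n (4i²−1)·x_i² = ∑_{i=1}^{n−1} [ (2i−1)·x_i + ∑_{k=1}^{n−i} 2(−1)^{k+1}·x_{i+k} ]² + (2n−1)²·x_n². -/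
private lemma my_neg_one_pow_sub {i n : ℕ} (h : i ≤ n) :
    (-1 : ℝ) ^ (n - i) = (-1) ^ n * (-1) ^ i := by
  have h2 : n - i + i = n := Nat.sub_add_cancel h
  rw [← h2, pow_add]
  rcases Nat.even_or_odd i with he | ho
  · simp [he.neg_one_pow]
  · simp [ho.neg_one_pow]

private lemma my_aux (n : ℕ) (x : ℕ → ℝ) :
    ∑ i ∈ Finset.Icc 1 n, (-1 : ℝ) ^ (n - i) *
      ((2 * (i : ℝ) - 2) * x i
        + ∑ k ∈ Finset.Icc 1 (n - i), 2 * (-1 : ℝ) ^ (k + 1) * x (i + k)) = 0 := by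
  induction n with
  | zero => simp
  | succ n ih =>
    rw [Finset.sum_Icc_succ_top (by omega : 1 ≤ n + 1)]
    have hstep : ∀ i ∈ Finset.Icc 1 n,
        (-1 : ℝ) ^ (n + 1 - i) *
          ((2 * (i : ℝ) - 2) * x i
            + ∑ k ∈ Finset.Icc 1 (n + 1 - i), 2 * (-1 : ℝ) ^ (k + 1) * x (i + k))
        = -((-1 : ℝ) ^ (n - i) *
            ((2 * (i : ℝ) - 2) * x i
              + ∑ k ∈ Finset.Icc 1 (n - i), 2 * (-1 : ℝ) ^ (k + 1) * x (i + k)))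
            - 2 * x (n + 1) := by
      intro i hi
      simp only [Finset.mem_Icc] at hi
      have h1 : n + 1 - i = (n - i) + 1 := by omega
      have h2 : i + (n - i + 1) = n + 1 := by omega
      rw [h1, Finset.sum_Icc_succ_top (by omega : 1 ≤ n - i + 1), h2]
      have h3 : (-1 : ℝ) ^ (n - i + 1 + 1) = (-1) ^ (n - i) := by
        rw [pow_succ, pow_succ]; ring
      rw [h3, pow_succ]
      have hsq : (-1 : ℝ) ^ (n - i) * (-1 : ℝ) ^ (n - i) = 1 := by
        rw [← pow_add]; exact Even.neg_one_pow ⟨n - i, rfl⟩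
      linear_combination (-2 * x (n + 1)) * hsq
    rw [Finset.sum_congr rfl hstep, Finset.sum_sub_distrib, Finset.sum_neg_distrib, ih,
      Finset.sum_const, Nat.card_Icc]
    simp
    ring

private lemma my_key2 (n : ℕ) (x : ℕ → ℝ) :
    ∑ i ∈ Finset.Icc 1 n, (-1 : ℝ) ^ (n - i) * x i
      = (-1) ^ (n + 1) / 2 * ∑ i ∈ Finset.Icc 1 n, 2 * (-1 : ℝ) ^ (i + 1) * x i := by
  rw [Finset.mul_sum]
  refine Finset.sum_congr rfl fun i hi => ?_
  simp only [Finset.mem_Icc] at hi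
  rw [my_neg_one_pow_sub hi.2, pow_succ, pow_succ]
  ring

/-- The sum-of-squares decomposition (equation (A.4)/(eq:induction) in the proof of
Lemma 5.9 of the paper):
`−(1/2)(∑_{i=1}^n 2(−1)^{i+1} x_i)² + ∑_{i=1}^n (4i²−1) x_i²
  = ∑_{i=1}^{n−1} [(2i−1) x_i + ∑_{k=1}^{n−i} 2(−1)^{k+1} x_{i+k}]² + (2n−1)² x_n²`. -/
theorem stmt_10 (n : ℕ) (hn : 1 ≤ n) (x : ℕ → ℝ) :
    -(1 / 2) * (∑ i ∈ Finset.Icc 1 n, 2 * (-1 : ℝ) ^ (i + 1) * x i) ^ 2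
      + ∑ i ∈ Finset.Icc 1 n, (4 * (i : ℝ) ^ 2 - 1) * x i ^ 2
    = ∑ i ∈ Finset.Icc 1 (n - 1),
        ((2 * (i : ℝ) - 1) * x i
          + ∑ k ∈ Finset.Icc 1 (n - i), 2 * (-1 : ℝ) ^ (k + 1) * x (i + k)) ^ 2
      + (2 * (n : ℝ) - 1) ^ 2 * x n ^ 2 := by
  induction n, hn using Nat.le_induction with
  | base =>
    norm_num
    ring
  | succ n hn ih =>
    obtain ⟨m, rfl⟩ : ∃ m, n = m + 1 := ⟨n - 1, by omega⟩
    simp only [Nat.add_sub_cancel] at ih ⊢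
    have hRHS : ∀ i ∈ Finset.Icc 1 (m + 1),
        ((2 * (i : ℝ) - 1) * x i
          + ∑ k ∈ Finset.Icc 1 (m + 1 + 1 - i), 2 * (-1 : ℝ) ^ (k + 1) * x (i + k)) ^ 2
        = ((2 * (i : ℝ) - 1) * x i
            + ∑ k ∈ Finset.Icc 1 (m + 1 - i), 2 * (-1 : ℝ) ^ (k + 1) * x (i + k)) ^ 2
          + (4 * x (m + 1 + 1) * ((-1 : ℝ) ^ (m + 1 - i) * x i)
             + 4 * x (m + 1 + 1) * ((-1 : ℝ) ^ (m + 1 - i) *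
               ((2 * (i : ℝ) - 2) * x i
                 + ∑ k ∈ Finset.Icc 1 (m + 1 - i), 2 * (-1 : ℝ) ^ (k + 1) * x (i + k))))
          + 4 * x (m + 1 + 1) ^ 2 := by
      intro i hi
      simp only [Finset.mem_Icc] at hi
      have h1 : m + 1 + 1 - i = (m + 1 - i) + 1 := by omega
      have h2 : i + (m + 1 - i + 1) = m + 1 + 1 := by omega
      rw [h1, Finset.sum_Icc_succ_top (by omega : 1 ≤ m + 1 - i + 1), h2]
      have h3 : (-1 : ℝ) ^ (m + 1 - i + 1 + 1) = (-1) ^ (m + 1 - i) := by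
        rw [pow_succ, pow_succ]; ring
      rw [h3]
      have hsq : (-1 : ℝ) ^ (m + 1 - i) * (-1 : ℝ) ^ (m + 1 - i) = 1 := by
        rw [← pow_add]; exact Even.neg_one_pow ⟨m + 1 - i, rfl⟩
      linear_combination (4 * x (m + 1 + 1) ^ 2) * hsq
    have e1 : (∑ i ∈ Finset.Icc 1 (m + 1 + 1), 2 * (-1 : ℝ) ^ (i + 1) * x i)
        = (∑ i ∈ Finset.Icc 1 (m + 1), 2 * (-1 : ℝ) ^ (i + 1) * x i)
          + 2 * (-1 : ℝ) ^ (m + 1 + 1 + 1) * x (m + 1 + 1) :=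
      Finset.sum_Icc_succ_top (by omega) _
    have e2 : (∑ i ∈ Finset.Icc 1 (m + 1 + 1), (4 * (i : ℝ) ^ 2 - 1) * x i ^ 2)
        = (∑ i ∈ Finset.Icc 1 (m + 1), (4 * (i : ℝ) ^ 2 - 1) * x i ^ 2)
          + (4 * ((m + 1 + 1 : ℕ) : ℝ) ^ 2 - 1) * x (m + 1 + 1) ^ 2 :=
      Finset.sum_Icc_succ_top (by omega) _
    have e3 : (∑ i ∈ Finset.Icc 1 (m + 1),
          ((2 * (i : ℝ) - 1) * x i
            + ∑ k ∈ Finset.Icc 1 (m + 1 - i), 2 * (-1 : ℝ) ^ (k + 1) * x (i + k)) ^ 2)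
        = (∑ i ∈ Finset.Icc 1 m,
            ((2 * (i : ℝ) - 1) * x i
              + ∑ k ∈ Finset.Icc 1 (m + 1 - i), 2 * (-1 : ℝ) ^ (k + 1) * x (i + k)) ^ 2)
          + ((2 * ((m + 1 : ℕ) : ℝ) - 1) * x (m + 1)) ^ 2 := by
      rw [Finset.sum_Icc_succ_top (by omega : 1 ≤ m + 1)]
      norm_num
    rw [e1, e2, Finset.sum_congr rfl hRHS, Finset.sum_add_distrib, Finset.sum_add_distrib,
        Finset.sum_add_distrib, ← Finset.mul_sum, ← Finset.mul_sum, my_aux, my_key2, e3,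
        Finset.sum_const, Nat.card_Icc]
    have ht : (-1 : ℝ) ^ (m + 1) * (-1 : ℝ) ^ (m + 1) = 1 := by
      rw [← pow_add]; exact Even.neg_one_pow ⟨m + 1, rfl⟩
    simp only [nsmul_eq_mul, Nat.add_sub_cancel]
    have hp1 : (-1 : ℝ) ^ (m + 1 + 1 + 1) = (-1) ^ (m + 1) := by
      rw [pow_succ, pow_succ]; ring
    have hp2 : (-1 : ℝ) ^ (m + 1 + 1) = -(-1) ^ (m + 1) := by
      rw [pow_succ]; ring
    rw [hp1, hp2]
    push_cast at ih ⊢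
    linear_combination ih + (-2 * x (m + 1 + 1) ^ 2) * ht
end

section
/- For every integer n ≥ 1 and all real numbers x_1, …, x_n, one has (∑_{i=1}^n 2(−1)^{i+1} x_i)² ≤ 2·∑_{i=1}^n (4i²−1)·x_i². -/
lemma tele_sum (n : ℕ) :
    ∑ i ∈ Finset.Icc 1 n, (4 : ℝ) / (4 * (i : ℝ) ^ 2 - 1) = 2 - 2 / (2 * (n : ℝ) + 1) := by
  induction n with
  | zero => simp
  | succ m ih =>
    rw [Finset.sum_Icc_succ_top (by omega : 1 ≤ m + 1), ih]
    have h1 : (2 * ((m : ℝ)) + 1) ≠ 0 := by positivity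
    have h2 : (2 * ((m : ℝ)) + 3) ≠ 0 := by positivity
    have h3 : 4 * ((m : ℝ) + 1) ^ 2 - 1 ≠ 0 := by
      have hm : (0:ℝ) ≤ (m:ℝ) := Nat.cast_nonneg m
      nlinarith
    push_cast
    field_simp
    ring

/-- Finite version of the key inequality in the proof of Lemma 5.9 of the paper:
`(∑_{i=1}^n 2(−1)^{i+1} x_i)² ≤ 2 ∑_{i=1}^n (4i²−1) x_i²`. -/
theorem stmt_11 (n : ℕ) (hn : 1 ≤ n) (x : ℕ → ℝ) :
    (∑ i ∈ Finset.Icc 1 n, 2 * (-1 : ℝ) ^ (i + 1) * x i) ^ 2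
      ≤ 2 * ∑ i ∈ Finset.Icc 1 n, (4 * (i : ℝ) ^ 2 - 1) * x i ^ 2 := by
  set a : ℕ → ℝ := fun i => 2 * (-1 : ℝ) ^ (i + 1) / Real.sqrt (4 * (i : ℝ) ^ 2 - 1)
  set b : ℕ → ℝ := fun i => Real.sqrt (4 * (i : ℝ) ^ 2 - 1) * x i
  have hpos : ∀ i ∈ Finset.Icc 1 n, (0 : ℝ) < 4 * (i : ℝ) ^ 2 - 1 := by
    intro i hi
    simp only [Finset.mem_Icc] at hi
    have : (1 : ℝ) ≤ (i : ℝ) := by exact_mod_cast hi.1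
    nlinarith
  have hab : ∀ i ∈ Finset.Icc 1 n, 2 * (-1 : ℝ) ^ (i + 1) * x i = a i * b i := by
    intro i hi
    have h := hpos i hi
    have hs : Real.sqrt (4 * (i : ℝ) ^ 2 - 1) ≠ 0 := by positivity
    simp only [a, b]
    field_simp
  have ha2 : ∀ i ∈ Finset.Icc 1 n, a i ^ 2 = 4 / (4 * (i : ℝ) ^ 2 - 1) := by
    intro i hi
    have h := hpos i hi
    have hs : Real.sqrt (4 * (i : ℝ) ^ 2 - 1) ^ 2 = 4 * (i : ℝ) ^ 2 - 1 :=
      Real.sq_sqrt h.le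
    simp only [a, div_pow, mul_pow, hs]
    rw [← pow_mul]
    rw [pow_mul' (-1 : ℝ) (i+1) 2]
    norm_num
  have hb2 : ∀ i ∈ Finset.Icc 1 n, b i ^ 2 = (4 * (i : ℝ) ^ 2 - 1) * x i ^ 2 := by
    intro i hi
    have h := hpos i hi
    simp only [b, mul_pow, Real.sq_sqrt h.le]
  rw [Finset.sum_congr rfl hab]
  calc (∑ i ∈ Finset.Icc 1 n, a i * b i) ^ 2
      ≤ (∑ i ∈ Finset.Icc 1 n, a i ^ 2) * ∑ i ∈ Finset.Icc 1 n, b i ^ 2 :=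
        Finset.sum_mul_sq_le_sq_mul_sq (Finset.Icc 1 n) a b
    _ ≤ 2 * ∑ i ∈ Finset.Icc 1 n, (4 * (i : ℝ) ^ 2 - 1) * x i ^ 2 := by
        rw [Finset.sum_congr rfl ha2, Finset.sum_congr rfl hb2, tele_sum]
        have hbnn : 0 ≤ ∑ i ∈ Finset.Icc 1 n, (4 * (i : ℝ) ^ 2 - 1) * x i ^ 2 :=
          Finset.sum_nonneg fun i hi => mul_nonneg (hpos i hi).le (sq_nonneg _)
        have : 2 - 2 / (2 * (n : ℝ) + 1) ≤ 2 := by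
          have : 0 ≤ 2 / (2 * (n : ℝ) + 1) := by positivity
          linarith
        exact mul_le_mul_of_nonneg_right this hbnn
end

section
/- Let (x_i)_{i≥1} be a sequence of real numbers with ∑_{i=1}^∞ (4i²−1)·x_i² < ∞. Then the series ∑_{i=1}^∞ (−1)^{i+1}·x_i/(4i²−1) converges absolutely, and (2·∑_{i=1}^∞ (−1)^{i+1}·x_i/(4i²−1))² ≤ 2·∑_{i=1}^∞ (4i²−1)·x_i². -/
open Finset

lemma aux_w_ge (i : ℕ) : (3:ℝ) * ((i:ℝ)+1)^2 ≤ 4 * (i + 1 : ℝ) ^ 2 - 1 := by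
  nlinarith [sq_nonneg ((i:ℝ)), Nat.cast_nonneg (α := ℝ) i]

lemma aux_w_pos (i : ℕ) : (0:ℝ) < 4 * (i + 1 : ℝ) ^ 2 - 1 := by
  nlinarith [aux_w_ge i, sq_nonneg ((i:ℝ)+1), Nat.cast_nonneg (α := ℝ) i]

lemma aux_shift_summable : Summable (fun n : ℕ => (1:ℝ) / ((n:ℝ) + 1) ^ 2) := by
  have h : Summable (fun n : ℕ => (1:ℝ) / (n:ℝ) ^ 2) :=
    Real.summable_one_div_nat_pow.mpr (by norm_num)
  have := h.comp_injective Nat.succ_injective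
  refine this.congr fun n => ?_
  simp [Function.comp, Nat.succ_eq_add_one]

lemma aux_basel : ∑' n : ℕ, (1:ℝ) / ((n:ℝ) + 1) ^ 2 = Real.pi ^ 2 / 6 := by
  have h := hasSum_zeta_two.tsum_eq
  rw [Summable.tsum_eq_zero_add hasSum_zeta_two.summable] at h
  simp only [Nat.cast_zero, Nat.cast_add, Nat.cast_one] at h
  norm_num at h
  simpa [one_div] using h

lemma aux_h_le (i : ℕ) :
    1 / (4 * (i + 1 : ℝ) ^ 2 - 1) ^ 3 ≤ (1/27) * (1 / ((i:ℝ) + 1) ^ 2) := by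
  have hw := aux_w_ge i
  have hp : (0:ℝ) < ((i:ℝ)+1)^2 := by positivity
  have hwp := aux_w_pos i
  have hp1 : (1:ℝ) ≤ ((i:ℝ)+1)^2 := by nlinarith [Nat.cast_nonneg (α := ℝ) i]
  rw [show (1/27:ℝ) * (1/((i:ℝ)+1)^2) = 1 / (27*((i:ℝ)+1)^2) from one_div_mul_one_div 27 _,
    div_le_div_iff₀ (by positivity) (by positivity)]
  nlinarith [mul_pos hp hp, mul_pos (mul_pos hp hp) hp, mul_le_mul_of_nonneg_left hw hp.le,
    mul_le_mul_of_nonneg_left (mul_le_mul_of_nonneg_left hw hp.le) (by positivity : (0:ℝ) ≤ 3*((i:ℝ)+1)^2),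
    mul_le_mul_of_nonneg_left (mul_le_mul_of_nonneg_left hw hwp.le) hwp.le,
    mul_le_mul_of_nonneg_left hw hwp.le]

lemma aux_h_summable : Summable (fun i : ℕ => 1 / (4 * (i + 1 : ℝ) ^ 2 - 1) ^ 3) :=
  Summable.of_nonneg_of_le (fun i => div_nonneg zero_le_one (pow_nonneg (aux_w_pos i).le 3))
    (fun i => aux_h_le i) (aux_shift_summable.mul_left (1/27))

lemma aux_H_le : ∑' i : ℕ, 1 / (4 * (i + 1 : ℝ) ^ 2 - 1) ^ 3 ≤ 1/2 := by
  have h1 : ∑' i : ℕ, 1 / (4 * (i + 1 : ℝ) ^ 2 - 1) ^ 3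
      ≤ ∑' i : ℕ, (1/27) * (1 / ((i:ℝ) + 1) ^ 2) :=
    Summable.tsum_le_tsum aux_h_le aux_h_summable (aux_shift_summable.mul_left (1/27))
  rw [tsum_mul_left, aux_basel] at h1
  have hpi : Real.pi ≤ 4 := Real.pi_le_four
  nlinarith [Real.pi_pos]

/-- Weighted Cauchy–Schwarz estimate for the zeroth angular Fourier mode (proof of
Theorem 5.8 of the paper): if `∑_{i≥1} (4i²−1) x_i² < ∞`, then the series
`∑_{i≥1} (−1)^{i+1} x_i/(4i²−1)` converges absolutely and
`(2 ∑_{i≥1} (−1)^{i+1} x_i/(4i²−1))² ≤ 2 ∑_{i≥1} (4i²−1) x_i²`. -/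
theorem stmt_12 (x : ℕ → ℝ)
    (hsum : Summable (fun i : ℕ => (4 * (i + 1 : ℝ) ^ 2 - 1) * x (i + 1) ^ 2)) :
    Summable (fun i : ℕ => |x (i + 1) / (4 * (i + 1 : ℝ) ^ 2 - 1)|) ∧
    (2 * ∑' i : ℕ, (-1 : ℝ) ^ i * x (i + 1) / (4 * (i + 1 : ℝ) ^ 2 - 1)) ^ 2
      ≤ 2 * ∑' i : ℕ, (4 * (i + 1 : ℝ) ^ 2 - 1) * x (i + 1) ^ 2 := by
  have hwpos : ∀ i : ℕ, (0:ℝ) < 4 * (i + 1 : ℝ) ^ 2 - 1 := aux_w_pos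
  set f : ℕ → ℝ := fun i => |x (i + 1) / (4 * (i + 1 : ℝ) ^ 2 - 1)| with hf
  set g : ℕ → ℝ := fun i => (4 * (i + 1 : ℝ) ^ 2 - 1) * x (i + 1) ^ 2 with hg
  set h : ℕ → ℝ := fun i => 1 / (4 * (i + 1 : ℝ) ^ 2 - 1) ^ 3 with hh
  have hgsum : Summable g := hsum
  have hhsum : Summable h := aux_h_summable
  have hgnn : ∀ i, 0 ≤ g i := fun i => mul_nonneg (hwpos i).le (sq_nonneg _)
  have hhnn : ∀ i, 0 ≤ h i := fun i => div_nonneg zero_le_one (pow_nonneg (aux_w_pos i).le 3)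
  have hfgh : ∀ i, f i ^ 2 = g i * h i := by
    intro i
    have hwi := hwpos i
    simp only [hf, hg, hh, sq_abs, div_pow]
    field_simp
  have hfle : ∀ i, f i ≤ (g i + h i) / 2 := by
    intro i
    nlinarith [hfgh i, abs_nonneg (x (i+1) / (4 * (i + 1 : ℝ) ^ 2 - 1)), hgnn i, hhnn i,
      sq_nonneg (g i - h i)]
  have hfsum : Summable f :=
    Summable.of_nonneg_of_le (fun i => abs_nonneg _) hfle ((hgsum.add hhsum).div_const 2)
  refine ⟨hfsum, ?_⟩
  set G := ∑' i, g i with hG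
  set H := ∑' i, h i with hH
  have hGnn : 0 ≤ G := tsum_nonneg hgnn
  have hHnn : 0 ≤ H := tsum_nonneg hhnn
  -- Cauchy–Schwarz: (∑' f)² ≤ G * H
  have hCS : (∑' i, f i) ^ 2 ≤ G * H := by
    have key : ∀ s : Finset ℕ, ∑ i ∈ s, f i ≤ Real.sqrt (G * H) := by
      intro s
      set a : ℕ → ℝ := fun i => Real.sqrt (4 * (i + 1 : ℝ) ^ 2 - 1) * |x (i+1)| with ha
      set b : ℕ → ℝ := fun i =>
        1 / ((4 * (i + 1 : ℝ) ^ 2 - 1) * Real.sqrt (4 * (i + 1 : ℝ) ^ 2 - 1)) with hb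
      have hab : ∀ i, a i * b i = f i := by
        intro i
        have hwi := hwpos i
        have hs : Real.sqrt (4 * (i + 1 : ℝ) ^ 2 - 1) ^ 2 = 4 * (i + 1 : ℝ) ^ 2 - 1 :=
          Real.sq_sqrt hwi.le
        have hsp : 0 < Real.sqrt (4 * (i + 1 : ℝ) ^ 2 - 1) := Real.sqrt_pos.mpr hwi
        simp only [ha, hb, hf, abs_div, abs_of_pos hwi]
        field_simp
      have ha2 : ∀ i, a i ^ 2 = g i := by
        intro i
        have hs : Real.sqrt (4 * (i + 1 : ℝ) ^ 2 - 1) ^ 2 = 4 * (i + 1 : ℝ) ^ 2 - 1 :=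
          Real.sq_sqrt (hwpos i).le
        simp only [ha, hg, mul_pow, hs, sq_abs]
      have hb2 : ∀ i, b i ^ 2 = h i := by
        intro i
        have hs : Real.sqrt (4 * (i + 1 : ℝ) ^ 2 - 1) ^ 2 = 4 * (i + 1 : ℝ) ^ 2 - 1 :=
          Real.sq_sqrt (hwpos i).le
        simp only [hb, hh, div_pow, mul_pow, hs, one_pow]
        ring_nf
      have cs := Finset.sum_mul_sq_le_sq_mul_sq s a b
      have hga : ∑ i ∈ s, a i ^ 2 ≤ G := by
        simp_rw [ha2]; exact Summable.sum_le_tsum s (fun i _ => hgnn i) hgsum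
      have hhb : ∑ i ∈ s, b i ^ 2 ≤ H := by
        simp_rw [hb2]; exact Summable.sum_le_tsum s (fun i _ => hhnn i) hhsum
      have hfs2 : (∑ i ∈ s, f i) ^ 2 ≤ G * H := by
        calc (∑ i ∈ s, f i) ^ 2 = (∑ i ∈ s, a i * b i) ^ 2 := by simp_rw [hab]
          _ ≤ (∑ i ∈ s, a i ^ 2) * ∑ i ∈ s, b i ^ 2 := cs
          _ ≤ G * H := by
              apply mul_le_mul hga hhb (Finset.sum_nonneg fun i _ => sq_nonneg _) hGnn
      have hfsnn : 0 ≤ ∑ i ∈ s, f i := Finset.sum_nonneg fun i _ => abs_nonneg _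
      calc ∑ i ∈ s, f i = Real.sqrt ((∑ i ∈ s, f i) ^ 2) := (Real.sqrt_sq hfsnn).symm
        _ ≤ Real.sqrt (G * H) := Real.sqrt_le_sqrt hfs2
    have htle : ∑' i, f i ≤ Real.sqrt (G * H) := Summable.tsum_le_of_sum_le hfsum key
    calc (∑' i, f i) ^ 2 ≤ Real.sqrt (G * H) ^ 2 := by
          apply pow_le_pow_left₀ (tsum_nonneg fun i => abs_nonneg _) htle
      _ = G * H := Real.sq_sqrt (mul_nonneg hGnn hHnn)
  -- bound the signed sum by ∑' f
  have hssum : Summable (fun i : ℕ => (-1 : ℝ) ^ i * x (i + 1) / (4 * (i + 1 : ℝ) ^ 2 - 1)) := by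
    apply Summable.of_abs
    refine hfsum.congr fun i => ?_
    simp [hf, abs_div, abs_mul]
  have habs : |∑' i : ℕ, (-1 : ℝ) ^ i * x (i + 1) / (4 * (i + 1 : ℝ) ^ 2 - 1)| ≤ ∑' i, f i := by
    have := norm_tsum_le_tsum_norm (f := fun i : ℕ =>
      (-1 : ℝ) ^ i * x (i + 1) / (4 * (i + 1 : ℝ) ^ 2 - 1)) ?_
    · refine le_trans this (le_of_eq ?_)
      apply tsum_congr; intro i
      simp [hf, Real.norm_eq_abs, abs_div, abs_mul]
    · refine hfsum.congr fun i => ?_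
      simp [hf, Real.norm_eq_abs, abs_div, abs_mul]
  have hHhalf : H ≤ 1/2 := aux_H_le
  set S := ∑' i : ℕ, (-1 : ℝ) ^ i * x (i + 1) / (4 * (i + 1 : ℝ) ^ 2 - 1) with hS
  have hS2 : S ^ 2 ≤ (∑' i, f i) ^ 2 := by
    have := sq_abs S
    nlinarith [abs_nonneg S, tsum_nonneg (L := SummationFilter.unconditional ℕ) (fun i => abs_nonneg (x (i + 1) / (4 * (i + 1 : ℝ) ^ 2 - 1)))]
  have : S ^ 2 ≤ G * H := le_trans hS2 hCS
  nlinarith [mul_le_mul_of_nonneg_left hHhalf hGnn]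
end
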